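/- If the null vector field ℓ = ∂/∂v of the Kundt metric is a Killing vector field, then it is covariantly constant: under the hypotheses ∂H/∂v = 0 and ∂W_i/∂v = 0 identically for all i = 2,…,n−1, the one-form ℓ♭ (components ℓ_u = 1, others zero) satisfies ∇_a ℓ_b = 0 for all a,b. Thus the most general metric admitting a covariantly constant null vector is the Kundt metric with H = H(u,x^k) and W_i = W_i(u,x^k). -/

import Mathlib

open Matrix

/-- Points of the Kundt spacetime `ℝⁿ` with `n = m + 2`, written as coordinates
`(v, u, x)` with transverse coordinates `x = (x²,…,x^{n-1}) ∈ ℝ^m`. -/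
abbrev KPt (m : ℕ) := ℝ × ℝ × (Fin m → ℝ)

/-- Coordinate indices for the Kundt metric: `Sum.inl 0` is the `v`-index, `Sum.inl 1` is the
`u`-index, and `Sum.inr k` are the transverse indices. -/
abbrev KIdx (m : ℕ) := Fin 2 ⊕ Fin m

/-- The Kundt metric `ds² = 2du(dv + H du + W_i dx^i) + g_ij dx^i dx^j`, as a symmetric
matrix-valued function on `ℝⁿ`: components `g_vv = 0`, `g_vu = g_uv = 1`, `g_vi = 0`,
`g_uu = 2H`, `g_ui = W_i`, and transverse block `g_ij(u,x)`. -/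
noncomputable def kundt {m : ℕ} (H : KPt m → ℝ) (W : Fin m → KPt m → ℝ)
    (gT : ℝ → (Fin m → ℝ) → Matrix (Fin m) (Fin m) ℝ) (p : KPt m) :
    Matrix (KIdx m) (KIdx m) ℝ :=
  Matrix.of fun a b =>
    match a, b with
    | Sum.inl i, Sum.inl j =>
        if i = 0 then (if j = 0 then 0 else 1)
        else (if j = 0 then 1 else 2 * H p)
    | Sum.inl i, Sum.inr _k => if i = 0 then 0 else W _k p
    | Sum.inr _k, Sum.inl i => if i = 0 then 0 else W _k p
    | Sum.inr k, Sum.inr l => gT p.2.1 p.2.2 k l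

/-- The Minkowski matrix `diag(-1,1,…,1)` on the Kundt index set. -/
noncomputable def kMink (m : ℕ) : Matrix (KIdx m) (KIdx m) ℝ :=
  Matrix.diagonal (fun a => if a = Sum.inl 0 then (-1 : ℝ) else 1)

/-- The coordinate basis vectors of `ℝⁿ = ℝ × ℝ × ℝ^м`: `∂/∂v`, `∂/∂u` and `∂/∂x^k`. -/
noncomputable def kBasis {m : ℕ} : KIdx m → KPt m
  | Sum.inl i => if i = 0 then ((1 : ℝ), (0 : ℝ), (0 : Fin m → ℝ)) else (0, 1, 0)
  | Sum.inr k => (0, 0, Pi.single k 1)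

/-- The coordinate partial derivative `∂_a f` of a scalar function on `ℝⁿ`. -/
noncomputable def kPDeriv {m : ℕ} (a : KIdx m) (f : KPt m → ℝ) (p : KPt m) : ℝ :=
  fderiv ℝ f p (kBasis a)

/-- The Levi-Civita connection coefficients
`Γ^d_ab = (1/2) g^{dc} (∂_a g_cb + ∂_b g_ca - ∂_c g_ab)` of the Kundt metric. -/
noncomputable def kChristoffel {m : ℕ} (H : KPt m → ℝ) (W : Fin m → KPt m → ℝ)
    (gT : ℝ → (Fin m → ℝ) → Matrix (Fin m) (Fin m) ℝ) (d a b : KIdx m) (p : KPt m) : ℝ :=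
  (1 / 2) * ∑ c : KIdx m, (kundt H W gT p)⁻¹ d c *
    (kPDeriv a (fun q => kundt H W gT q c b) p + kPDeriv b (fun q => kundt H W gT q c a) p
      - kPDeriv c (fun q => kundt H W gT q a b) p)

/-- The one-form `ℓ♭` with components `ℓ_a = g_av`, i.e. `ℓ_u = 1` and all other components
zero. -/
noncomputable def lFlat {m : ℕ} : KIdx m → ℝ := fun a => if a = Sum.inl 1 then 1 else 0

/-- The covariant derivative `∇_a ℓ_b = ∂_a ℓ_b - Γ^c_ab ℓ_c` of the constant one-form `ℓ♭`
with respect to the Levi-Civita connection of the Kundt metric. -/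
noncomputable def kCovDl {m : ℕ} (H : KPt m → ℝ) (W : Fin m → KPt m → ℝ)
    (gT : ℝ → (Fin m → ℝ) → Matrix (Fin m) (Fin m) ℝ) (a b : KIdx m) (p : KPt m) : ℝ :=
  kPDeriv a (fun _ => lFlat b) p - ∑ c : KIdx m, kChristoffel H W gT c a b p * lFlat c

/-- The null coordinate vector field `ℓ = ∂/∂v`, as a vector of components. -/
noncomputable def lVec {m : ℕ} : KIdx m → ℝ := fun a => if a = Sum.inl 0 then 1 else 0

/-! The row `g_{v·}` of the Kundt metric is the constant covector `du`, so, `g` being invertible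
together with its transverse block, the `u`-row of `g⁻¹` is `∂_v` and `Γ^u_{ab} = -½ ∂_v g_{ab}`.
Hence `∇_a ℓ_b = -Γ^u_{ab} = ½ ∂_v g_{ab} = ½ (𝓛_ℓ g)_{ab}`, which vanishes once `H` and `W_i`
are `v`-independent. -/

theorem fderiv_apply_eq_zero_of_forall_add_smul_eq {𝕜 E F : Type*} [NontriviallyNormedField 𝕜]
    [NormedAddCommGroup E] [NormedSpace 𝕜 E] [NormedAddCommGroup F] [NormedSpace 𝕜 F]
    {f : E → F} {e : E} (hf : ∀ q (t : 𝕜), f (q + t • e) = f q) (p : E) :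
    fderiv 𝕜 f p e = 0 := by
  by_cases hd : DifferentiableAt 𝕜 f p
  · rw [← hd.lineDeriv_eq_fderiv, lineDeriv]
    simp [hf]
  · simp [fderiv_zero_of_not_differentiableAt hd]

theorem Matrix.inv_row_eq_single_of_row_eq_single {n : Type*} [Fintype n] [DecidableEq n]
    {K : Type*} [Field K] {A : Matrix n n K} (hA : IsUnit A.det) {i j : n}
    (hrow : A i = Pi.single j 1) : A⁻¹ j = Pi.single i 1 := by
  calc A⁻¹ j = (Pi.single i 1 ᵥ* A) ᵥ* A⁻¹ := by
        rw [single_one_vecMul, row, hrow, single_one_vecMul, row]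
    _ = Pi.single i 1 := by rw [vecMul_vecMul, mul_nonsing_inv A hA, vecMul_one]

section Kundt

variable {m : ℕ} (H : KPt m → ℝ) (W : Fin m → KPt m → ℝ)
  (gT : ℝ → (Fin m → ℝ) → Matrix (Fin m) (Fin m) ℝ) (p : KPt m)

theorem kundt_row_v : kundt H W gT p (Sum.inl 0) = Pi.single (Sum.inl 1) 1 := by
  funext c
  rcases c with j | l
  · fin_cases j <;> simp [kundt]
  · simp [kundt]

theorem isUnit_det_kundt (hT : (gT p.2.1 p.2.2).det ≠ 0) : IsUnit (kundt H W gT p).det := by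
  rw [isUnit_iff_ne_zero, Ne, ← exists_mulVec_eq_zero_iff]
  rintro ⟨x, hx0, hx⟩
  apply hx0
  have hxu : x (Sum.inl 1) = 0 := by
    simpa [mulVec, kundt_row_v] using congrFun hx (Sum.inl 0)
  have hxT : ∀ l, x (Sum.inr l) = 0 := by
    refine congrFun (eq_zero_of_mulVec_eq_zero hT (v := x ∘ Sum.inr) (funext fun k => ?_))
    simpa [mulVec, dotProduct, Fintype.sum_sum_type, kundt, hxu] using congrFun hx (Sum.inr k)
  have hxv : x (Sum.inl 0) = 0 := by
    simpa [mulVec, dotProduct, Fintype.sum_sum_type, kundt, hxu, hxT] using congrFun hx (Sum.inl 1)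
  funext c
  rcases c with j | l
  · fin_cases j
    exacts [hxv, hxu]
  · exact hxT l

theorem kundt_inv_row_u (hT : (gT p.2.1 p.2.2).det ≠ 0) :
    (kundt H W gT p)⁻¹ (Sum.inl 1) = Pi.single (Sum.inl 0) 1 :=
  inv_row_eq_single_of_row_eq_single (isUnit_det_kundt H W gT p hT) (kundt_row_v H W gT p)

theorem kPDeriv_kundt_row_v (a b : KIdx m) :
    kPDeriv a (fun q => kundt H W gT q (Sum.inl 0) b) p = 0 := by
  simp [kundt_row_v, kPDeriv]

variable {H W gT} in
theorem kPDeriv_v_kundt (hHv : ∀ p : KPt m, kPDeriv (Sum.inl 0) H p = 0)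
    (hWv : ∀ (k : Fin m) (p : KPt m), kPDeriv (Sum.inl 0) (W k) p = 0) (a b : KIdx m) :
    kPDeriv (Sum.inl 0) (fun q => kundt H W gT q a b) p = 0 := by
  have hv_indep : ∀ f : KPt m → ℝ, (∀ q (t : ℝ), f (q + t • kBasis (Sum.inl 0)) = f q) →
      kPDeriv (Sum.inl 0) f p = 0 :=
    fun f hf => fderiv_apply_eq_zero_of_forall_add_smul_eq hf p
  rcases a with i | k <;> rcases b with j | l
  · fin_cases i <;> fin_cases j
    · exact hv_indep _ fun q t => by simp [kundt]
    · exact hv_indep _ fun q t => by simp [kundt]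
    · exact hv_indep _ fun q t => by simp [kundt]
    · show kPDeriv (Sum.inl 0) (fun q => kundt H W gT q (Sum.inl 1) (Sum.inl 1)) p = 0
      have h2H : (fun q => kundt H W gT q (Sum.inl 1) (Sum.inl 1)) = (2 : ℝ) • H := by
        funext q; simp [kundt]
      rw [h2H, kPDeriv, fderiv_const_smul_field]
      simpa [kPDeriv] using hHv p
  · fin_cases i
    · exact hv_indep _ fun q t => by simp [kundt]
    · simpa [kundt] using hWv l p
  · fin_cases j
    · exact hv_indep _ fun q t => by simp [kundt]
    · simpa [kundt] using hWv k p
  · exact hv_indep _ fun q t => by simp [kundt, kBasis]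

theorem kCovDl_eq_half_kPDeriv_v (hT : (gT p.2.1 p.2.2).det ≠ 0) (a b : KIdx m) :
    kCovDl H W gT a b p = 1 / 2 * kPDeriv (Sum.inl 0) (fun q => kundt H W gT q a b) p := by
  have hconst : kPDeriv a (fun _ => lFlat (m := m) b) p = 0 := by simp [kPDeriv]
  have hpick :
      ∑ c, kChristoffel H W gT c a b p * lFlat c = kChristoffel H W gT (Sum.inl 1) a b p := by
    simp [lFlat]
  have hΓ : kChristoffel H W gT (Sum.inl 1) a b p =
      -(1 / 2) * kPDeriv (Sum.inl 0) (fun q => kundt H W gT q a b) p := by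
    rw [kChristoffel, kundt_inv_row_u H W gT p hT]
    simp [Pi.single_apply, kPDeriv_kundt_row_v]
  rw [kCovDl, hconst, hpick, hΓ]
  ring

end Kundt

theorem kundt_killing_implies_ccnv_general {m : ℕ}
    (H : KPt m → ℝ) (W : Fin m → KPt m → ℝ)
    (gT : ℝ → (Fin m → ℝ) → Matrix (Fin m) (Fin m) ℝ)
    (hpos : ∀ u x, (gT u x).PosDef)
    (hHv : ∀ p : KPt m, kPDeriv (Sum.inl 0) H p = 0)
    (hWv : ∀ (k : Fin m) (p : KPt m), kPDeriv (Sum.inl 0) (W k) p = 0) :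
    ∀ (p : KPt m) (a b : KIdx m), kCovDl H W gT a b p = 0 := by
  intro p a b
  rw [kCovDl_eq_half_kPDeriv_v H W gT p (hpos _ _).det_pos.ne' a b,
    kPDeriv_v_kundt p hHv hWv a b, mul_zero]

/-- If the null vector field `ℓ = ∂/∂v` of the Kundt metric is a Killing vector field, i.e.
`∂H/∂v = 0` and `∂W_i/∂v = 0` identically, then it is covariantly constant: `∇_a ℓ_b = 0`
for all `a, b`. Thus the most general metric admitting a covariantly constant null vector is
the Kundt metric with `H = H(u,x^k)` and `W_i = W_i(u,x^k)`. -/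
theorem kundt_killing_implies_ccnv {m : ℕ} (hm : 2 ≤ m)
    (H : KPt m → ℝ) (W : Fin m → KPt m → ℝ)
    (gT : ℝ → (Fin m → ℝ) → Matrix (Fin m) (Fin m) ℝ)
    (hH : ContDiff ℝ (⊤ : ℕ∞) H) (hW : ∀ k, ContDiff ℝ (⊤ : ℕ∞) (W k))
    (hgT : ∀ k l, ContDiff ℝ (⊤ : ℕ∞) (fun q : ℝ × (Fin m → ℝ) => gT q.1 q.2 k l))
    (hsym : ∀ u x, (gT u x).IsSymm) (hpos : ∀ u x, (gT u x).PosDef)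
    (hHv : ∀ p : KPt m, kPDeriv (Sum.inl 0) H p = 0)
    (hWv : ∀ (k : Fin m) (p : KPt m), kPDeriv (Sum.inl 0) (W k) p = 0) :
    ∀ (p : KPt m) (a b : KIdx m), kCovDl H W gT a b p = 0 :=
  kundt_killing_implies_ccnv_general H W gT hpos hHv hWv
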